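/- Let K ≥ 1, ρ_1,…,ρ_K > 0 with ∑ρ_l = 1, Θ_1,…,Θ_K > 0, set θ = ∑_{l=1}^K ρ_l Θ_l, and let σ > 0 satisfy 3σ² < 2θ. Then ( ∑_{l=1}^K (ρ_l/Θ_l)(1 − 3σ²/(2Θ_l)) ) / ( ∑_{l=1}^K ρ_l/Θ_l ) ≤ 1 − 3σ²/(2θ) < 1. In other words, the leading-order squared equilibrium value of the heterogeneous model, (ξ_b^{div})², is at most the leading-order squared equilibrium value of the homogeneous model, (ξ_b^{homo})² = 1 − 3σ²/(2θ), which is itself less than 1. -/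

import Mathlib

/-!
Write `S₁ = ∑ ρ_l/Θ_l` and `S₂ = ∑ ρ_l/Θ_l²`. The heterogeneous value is `1 - (3σ²/2) S₂/S₁`, so
the inequality is `S₁ ≤ θ S₂`. Two applications of Cauchy–Schwarz give `1 = (∑ ρ_l)² ≤ θ S₁` and
`S₁² ≤ (∑ ρ_l) S₂ = S₂`, and multiplying them yields `S₁² ≤ θ S₁ S₂`.
-/

namespace Finset

variable {ι R : Type*} [Field R] [LinearOrder R] [IsStrictOrderedRing R]
  {s : Finset ι} {w x : ι → R}

theorem sq_sum_le_sum_mul_mul_sum_div (hw : ∀ i ∈ s, 0 ≤ w i) (hx : ∀ i ∈ s, 0 < x i) :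
    (∑ i ∈ s, w i) ^ 2 ≤ (∑ i ∈ s, w i * x i) * ∑ i ∈ s, w i / x i :=
  sum_sq_le_sum_mul_sum_of_sq_le_mul s
    (fun i hi ↦ mul_nonneg (hw i hi) (hx i hi).le) (fun i hi ↦ div_nonneg (hw i hi) (hx i hi).le)
    fun i hi ↦ le_of_eq (by field_simp [(hx i hi).ne'])

theorem sq_sum_div_le_sum_mul_sum_div_sq (hw : ∀ i ∈ s, 0 ≤ w i) (hx : ∀ i ∈ s, 0 < x i) :
    (∑ i ∈ s, w i / x i) ^ 2 ≤ (∑ i ∈ s, w i) * ∑ i ∈ s, w i / x i ^ 2 :=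
  sum_sq_le_sum_mul_sum_of_sq_le_mul s hw (fun i hi ↦ div_nonneg (hw i hi) (sq_nonneg _))
    fun i hi ↦ le_of_eq (by field_simp [(hx i hi).ne'])

theorem sum_mul_sum_div_le_sum_mul_mul_sum_div_sq (hw : ∀ i ∈ s, 0 ≤ w i)
    (hx : ∀ i ∈ s, 0 < x i) :
    (∑ i ∈ s, w i) * ∑ i ∈ s, w i / x i ≤ (∑ i ∈ s, w i * x i) * ∑ i ∈ s, w i / x i ^ 2 := by
  set W := ∑ i ∈ s, w i
  set S₁ := ∑ i ∈ s, w i / x i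
  set A := ∑ i ∈ s, w i * x i
  set S₂ := ∑ i ∈ s, w i / x i ^ 2
  have hA : 0 ≤ A := sum_nonneg fun i hi ↦ mul_nonneg (hw i hi) (hx i hi).le
  have hS₁ : 0 ≤ S₁ := sum_nonneg fun i hi ↦ div_nonneg (hw i hi) (hx i hi).le
  have hS₂ : 0 ≤ S₂ := sum_nonneg fun i hi ↦ div_nonneg (hw i hi) (sq_nonneg _)
  rcases (mul_nonneg (sum_nonneg hw) hS₁ : 0 ≤ W * S₁).eq_or_lt with hzero | hpos
  · rw [← hzero]
    exact mul_nonneg hA hS₂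
  · refine le_of_mul_le_mul_left ?_ hpos
    calc W * S₁ * (W * S₁) = W ^ 2 * S₁ ^ 2 := by ring
      _ ≤ (A * S₁) * (W * S₂) := mul_le_mul (sq_sum_le_sum_mul_mul_sum_div hw hx)
          (sq_sum_div_le_sum_mul_sum_div_sq hw hx) (sq_nonneg _) (mul_nonneg hA hS₁)
      _ = W * S₁ * (A * S₂) := by ring

end Finset

theorem stmt_3_general (K : ℕ) (ρ Θ : Fin K → ℝ)
    (hρ : ∀ l, 0 < ρ l) (hsum : ∑ l, ρ l = 1) (hΘ : ∀ l, 0 < Θ l)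
    (θ σ : ℝ) (hθ : θ = ∑ l, ρ l * Θ l) (hσ : 0 < σ)
    (hcrit : 3 * σ ^ 2 < 2 * θ) :
    (∑ l, (ρ l / Θ l) * (1 - 3 * σ ^ 2 / (2 * Θ l))) / (∑ l, ρ l / Θ l)
      ≤ 1 - 3 * σ ^ 2 / (2 * θ) ∧
    1 - 3 * σ ^ 2 / (2 * θ) < 1 := by
  set S₁ := ∑ l, ρ l / Θ l
  set S₂ := ∑ l, ρ l / Θ l ^ 2
  have hρ₀ : ∀ l ∈ Finset.univ, 0 ≤ ρ l := fun l _ ↦ (hρ l).le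
  have hΘ₀ : ∀ l ∈ Finset.univ, 0 < Θ l := fun l _ ↦ hΘ l
  have hθ₀ : 0 < θ := by linarith [sq_nonneg σ]
  have hθS₁ : 1 ≤ θ * S₁ := by
    simpa [hsum, ← hθ] using Finset.sq_sum_le_sum_mul_mul_sum_div hρ₀ hΘ₀
  have hS₁ : 0 < S₁ := pos_of_mul_pos_right (one_pos.trans_le hθS₁) hθ₀.le
  have hS₁S₂ : S₁ ≤ θ * S₂ := by
    simpa [hsum, ← hθ] using Finset.sum_mul_sum_div_le_sum_mul_mul_sum_div_sq hρ₀ hΘ₀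
  have hnum : ∑ l, (ρ l / Θ l) * (1 - 3 * σ ^ 2 / (2 * Θ l)) = S₁ - 3 * σ ^ 2 / 2 * S₂ := by
    rw [Finset.mul_sum, ← Finset.sum_sub_distrib]
    refine Finset.sum_congr rfl fun l _ ↦ ?_
    field_simp [(hΘ l).ne']
  have hc : 0 < 3 * σ ^ 2 / (2 * θ) := by positivity
  refine ⟨?_, by linarith⟩
  rw [hnum, div_le_iff₀ hS₁]
  calc S₁ - 3 * σ ^ 2 / 2 * S₂ = S₁ - 3 * σ ^ 2 / (2 * θ) * (θ * S₂) := by field_simp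
    _ ≤ S₁ - 3 * σ ^ 2 / (2 * θ) * S₁ := by gcongr
    _ = (1 - 3 * σ ^ 2 / (2 * θ)) * S₁ := by ring

/-- If `3σ² < 2θ` with `θ = ∑ ρ_l Θ_l`, then
`(∑ (ρ_l/Θ_l)(1 − 3σ²/(2Θ_l)))/(∑ ρ_l/Θ_l) ≤ 1 − 3σ²/(2θ) < 1`:
the leading-order squared heterogeneous equilibrium is at most the homogeneous one,
which is itself less than 1. -/
theorem stmt_3 (K : ℕ) (hK : 1 ≤ K) (ρ Θ : Fin K → ℝ)
    (hρ : ∀ l, 0 < ρ l) (hsum : ∑ l, ρ l = 1) (hΘ : ∀ l, 0 < Θ l)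
    (θ σ : ℝ) (hθ : θ = ∑ l, ρ l * Θ l) (hσ : 0 < σ)
    (hcrit : 3 * σ ^ 2 < 2 * θ) :
    (∑ l, (ρ l / Θ l) * (1 - 3 * σ ^ 2 / (2 * Θ l))) / (∑ l, ρ l / Θ l)
      ≤ 1 - 3 * σ ^ 2 / (2 * θ) ∧
    1 - 3 * σ ^ 2 / (2 * θ) < 1 :=
  stmt_3_general K ρ Θ hρ hsum hΘ θ σ hθ hσ hcrit
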